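/- Let Φ be order isomorphic to a subset S of ℝ, let Γ be a subgroup of the Hahn group Σ_{φ∈Φ} ℝ (with all ribs A_φ = ℝ), and let k contain all real exponents appearing in elements of Γ. Then k((Γ)) carries a series derivation of Hardy type d such that for every φ ∈ Φ, d(t_φ)/t_φ is a monomial c_φ t^{θ_φ} with c_φ ∈ k. -/

import Mathlib

/- Common setting: a generalized series field `k((Γ))`, where the totally ordered abelian
group `Γ` is regarded, via Hahn's embedding theorem, as a subgroup of the Hahn group
`Σ_{φ ∈ Φ} ℝ = HahnSeries Φ ℝ`, and the coefficient field `k` contains the real exponents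
(via a ring homomorphism `ι : ℝ →+* k`). -/

open HahnSeries

noncomputable section

/-- Archimedean equivalence on an ordered abelian group. -/
def ArchEquiv {Γ : Type*} [AddCommGroup Γ] [LinearOrder Γ] [IsOrderedAddMonoid Γ] (x y : Γ) : Prop :=
  ∃ n : ℕ, |x| ≤ n • |y| ∧ |y| ≤ n • |x|

/-- Lexicographic positivity of a (generalized) Hahn series: the leading coefficient is
positive. -/
def LexPos {Φ : Type*} [LinearOrder Φ] {R : Type*} [Zero R] [PartialOrder R]
    (x : HahnSeries Φ R) : Prop :=
  ∃ φ, 0 < x.coeff φ ∧ ∀ ψ, ψ < φ → x.coeff ψ = 0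

/-- Lexicographic order relation. -/
def LexLe {Φ : Type*} [LinearOrder Φ] {R : Type*} [AddCommGroup R] [PartialOrder R]
    (x y : HahnSeries Φ R) : Prop :=
  x = y ∨ LexPos (y - x)

/-- The data of Hahn's embedding theorem: `Γ` is (identified with) a subgroup of the Hahn
group `Σ_{φ ∈ Φ} ℝ` ordered lexicographically, containing the characteristic functions
`1_φ = single φ 1`.  The natural valuation of `γ ∈ Γ` is `(e γ).orderTop`. -/
structure HahnEmbeddingData (Φ : Type*) [LinearOrder Φ]
    (Γ : Type*) [AddCommGroup Γ] [LinearOrder Γ] [IsOrderedAddMonoid Γ] where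
  e : Γ →+ HahnSeries Φ ℝ
  inj : Function.Injective e
  ord : ∀ γ : Γ, 0 < γ ↔ LexPos (e γ)
  b : Φ → Γ
  hb : ∀ φ, e (b φ) = HahnSeries.single φ 1

variable {Φ : Type*} [LinearOrder Φ] {Γ : Type*} [AddCommGroup Γ] [LinearOrder Γ] [IsOrderedAddMonoid Γ]
  {k : Type*} [Field k]

/-- The fundamental monomial `t_φ = t^{1_φ}` in `k((Γ))`. -/
def tmon (H : HahnEmbeddingData Φ Γ) (k : Type*) [Field k] (φ : Φ) : HahnSeries Γ k :=
  HahnSeries.single (H.b φ) 1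

/-- The logarithmic derivative `d(t_φ)/t_φ` of the fundamental monomial `t_φ`. -/
def logDer (H : HahnEmbeddingData Φ Γ) (D : HahnSeries Γ k → HahnSeries Γ k) (φ : Φ) :
    HahnSeries Γ k :=
  D (tmon H k φ) * (tmon H k φ)⁻¹

/-- A series derivation on `k((Γ))`: a derivation which is strongly linear
(`d(Σ a_α t^α) = Σ a_α d(t^α)`, the family being summable) and satisfies the strong
Leibniz rule (`d(t^α) = t^α Σ_φ α_φ d(t_φ)/t_φ`, the family being summable). -/
structure IsSeriesDerivation (H : HahnEmbeddingData Φ Γ) (ι : ℝ →+* k)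
    (D : HahnSeries Γ k → HahnSeries Γ k) : Prop where
  map_add : ∀ x y, D (x + y) = D x + D y
  leibniz : ∀ x y, D (x * y) = D x * y + x * D y
  strong_linear : ∀ x : HahnSeries Γ k, ∃ s : SummableFamily Γ k Γ,
    (∀ γ, s γ = x.coeff γ • D (HahnSeries.single γ 1)) ∧ D x = s.hsum
  strong_leibniz : ∀ γ : Γ, ∃ s : SummableFamily Γ k Φ,
    (∀ φ, s φ = ι ((H.e γ).coeff φ) • (HahnSeries.single γ 1 * logDer H D φ)) ∧
    D (HahnSeries.single γ 1) = s.hsum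

/-- (HD1): the valuation ring is `ker d + m_v`. -/
def HDone (D : HahnSeries Γ k → HahnSeries Γ k) : Prop :=
  {x : HahnSeries Γ k | 0 ≤ x.orderTop} =
    {x : HahnSeries Γ k | ∃ c m, D c = 0 ∧ 0 < HahnSeries.orderTop m ∧ x = c + m}

/-- (HD2): l'Hospital's rule. -/
def HDtwo (D : HahnSeries Γ k → HahnSeries Γ k) : Prop :=
  ∀ a b : HahnSeries Γ k, a ≠ 0 → b ≠ 0 → a.order ≠ 0 → b.order ≠ 0 →
    (a.orderTop ≤ b.orderTop ↔ (D a).orderTop ≤ (D b).orderTop)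

/-- (HD3): compatibility of the logarithmic derivative with the valuation. -/
def HDthree (D : HahnSeries Γ k → HahnSeries Γ k) : Prop :=
  ∀ a b : HahnSeries Γ k, a ≠ 0 → b ≠ 0 → |b.order| < |a.order| → 0 < |b.order| →
    (D a * a⁻¹).orderTop ≤ (D b * b⁻¹).orderTop ∧
      ((D a * a⁻¹).orderTop = (D b * b⁻¹).orderTop ↔ ArchEquiv a.order b.order)

/-- A series derivation of Hardy type on `k((Γ))`. -/
def IsHardySeriesDerivation (H : HahnEmbeddingData Φ Γ) (ι : ℝ →+* k)
    (D : HahnSeries Γ k → HahnSeries Γ k) : Prop :=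
  IsSeriesDerivation H ι D ∧ HDone D ∧ HDtwo D ∧ HDthree D

end

/-! Choose exponents `θ φ ∈ Γ`, increasing in `φ`, with `θ ψ - θ φ` infinitesimal with respect
to `1_φ` whenever `φ < ψ`. Because `Φ` embeds into `ℝ`, countably many points of `Φ` lie above every
non-maximal `φ`; this yields a monotone `g` with `φ < g φ` for such `φ`, and since every rib is `ℝ`
we may take `θ φ := -ζ φ`, where `ζ φ` has leading monomial `exp (-f φ) 1_(g φ)`.

Put `d (Σ x_γ t^γ) := Σ_φ Σ_γ x_γ γ_φ t^(γ + θ φ)`. Along a sequence of contributing pairs `(γ, φ)`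
with `γ` increasing and `γ + θ φ` not increasing, `φ` decreases and every such `φ` lies in the
support of the first `γ`; by well-foundedness there is no such sequence, so the family is summable
and `d` is a series derivation with `d(t_φ)/t_φ = t^(θ φ)`. The same comparison shows that if `a`
has leading exponent `γ ≠ 0`, whose own leading exponent is `u`, then `d a` has leading exponent
`γ + θ u` and `d a / a` has leading exponent `θ u`. Since `γ ↦ γ + θ u` is strictly increasing and
`θ u` depends only on the Archimedean class of `γ`, this gives (HD2) and (HD3), and it shows that no
series of negative valuation is a constant, which gives (HD1). -/

theorem lexPos_iff_leadingCoeff_pos {Φ R : Type*} [LinearOrder Φ] [Zero R] [PartialOrder R]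
    (x : HahnSeries Φ R) : LexPos x ↔ 0 < x.leadingCoeff := by
  constructor
  · rintro ⟨φ, hpos, hlow⟩
    have hφ : x.orderTop = φ := orderTop_eq_of_le hpos.ne' fun ψ hψ => not_lt.1 (hψ ∘ hlow ψ)
    rwa [leadingCoeff, hφ]
  · intro h
    have hx : x ≠ 0 := by rintro rfl; simp at h
    refine ⟨x.orderTop.untop (orderTop_ne_top.2 hx), by rwa [coeff_untop_eq_leadingCoeff], ?_⟩
    intro ψ hψ
    exact coeff_eq_zero_of_lt_orderTop ((WithTop.lt_untop_iff _).1 hψ)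

theorem HahnSeries.orderTop_inv {Γ k : Type*} [AddCommGroup Γ] [LinearOrder Γ]
    [IsOrderedAddMonoid Γ] [Field k] (x : HahnSeries Γ k) : x⁻¹.orderTop = -x.orderTop := by
  rcases eq_or_ne x 0 with rfl | hx
  · simp
  have h := orderTop_mul x x⁻¹
  rw [mul_inv_cancel₀ hx, orderTop_one] at h
  rw [← order_eq_orderTop_of_ne_zero hx, ← order_eq_orderTop_of_ne_zero (inv_ne_zero hx)] at h ⊢
  rw [← WithTop.coe_add, ← WithTop.coe_zero, WithTop.coe_inj] at h
  rw [← WithTop.LinearOrderedAddCommGroup.coe_neg, WithTop.coe_inj]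
  exact eq_neg_of_add_eq_zero_right h.symm

theorem archEquiv_iff_mk_eq {M : Type*} [AddCommGroup M] [LinearOrder M] [IsOrderedAddMonoid M]
    {x y : M} : ArchEquiv x y ↔ ArchimedeanClass.mk x = ArchimedeanClass.mk y := by
  rw [ArchimedeanClass.mk_eq_mk]
  constructor
  · rintro ⟨n, hxy, hyx⟩
    exact ⟨⟨n, hyx⟩, ⟨n, hxy⟩⟩
  · rintro ⟨⟨m, hm⟩, ⟨n, hn⟩⟩
    exact ⟨max m n, hn.trans (nsmul_le_nsmul_left (abs_nonneg y) (le_max_right m n)),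
      hm.trans (nsmul_le_nsmul_left (abs_nonneg x) (le_max_left m n))⟩

namespace HahnSeries

variable {Γ R : Type*} [AddCommMonoid Γ] [PartialOrder Γ] [CommSemiring R]

/-- The derivation `Σ x_γ t^γ ↦ Σ c(γ) x_γ t^γ` attached to an additive weight `c`;
for `c = id` on Laurent series this is `t d/dt`. -/
def eulerDeriv (c : Γ →+ R) (x : HahnSeries Γ R) : HahnSeries Γ R where
  coeff γ := x.coeff γ * c γ
  isPWO_support' := x.isPWO_support.mono fun γ hγ hx => hγ (by simp [hx])

variable (c : Γ →+ R)

@[simp]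
theorem coeff_eulerDeriv (x : HahnSeries Γ R) (γ : Γ) :
    (eulerDeriv c x).coeff γ = x.coeff γ * c γ :=
  rfl

theorem eulerDeriv_add (x y : HahnSeries Γ R) :
    eulerDeriv c (x + y) = eulerDeriv c x + eulerDeriv c y := by
  ext γ
  simp [add_mul]

theorem eulerDeriv_mul [IsOrderedCancelAddMonoid Γ] (x y : HahnSeries Γ R) :
    eulerDeriv c (x * y) = eulerDeriv c x * y + x * eulerDeriv c y := by
  have hsub {z : HahnSeries Γ R} : (eulerDeriv c z).support ⊆ z.support :=
    fun γ hγ hz => hγ (by simp [hz])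
  ext γ
  rw [coeff_add, coeff_eulerDeriv, coeff_mul_left' x.isPWO_support hsub,
    coeff_mul_right' y.isPWO_support hsub, coeff_mul, Finset.sum_mul, ← Finset.sum_add_distrib]
  refine Finset.sum_congr rfl fun ij hij => ?_
  rw [← (Finset.mem_antidiagonal.1 hij).2.2, map_add, coeff_eulerDeriv, coeff_eulerDeriv]
  ring

theorem eulerDeriv_single (γ : Γ) (r : R) : eulerDeriv c (single γ r) = single γ (r * c γ) := by
  ext γ'
  by_cases h : γ' = γ
  · subst h; simp
  · simp [coeff_single_of_ne h]

end HahnSeries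

theorem exists_seq_forall_exists_lt {Φ : Type*} [LinearOrder Φ] [Nonempty Φ] {f : Φ → ℝ}
    (hf : StrictMono f) : ∃ q : ℕ → Φ, ∀ x y, x < y → ∃ n, x < q n := by
  classical
  obtain ⟨r, hr⟩ := exists_surjective_nat ℚ
  refine ⟨fun n => if h : ∃ z, (r n : ℝ) < f z then h.choose else Classical.arbitrary Φ,
    fun x y hxy => ?_⟩
  obtain ⟨s, hxs, hsy⟩ := exists_rat_btwn (hf hxy)
  obtain ⟨n, rfl⟩ := hr s
  have h : ∃ z, (r n : ℝ) < f z := ⟨y, hsy⟩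
  exact ⟨n, hf.lt_iff_lt.1 (by simpa only [dif_pos h] using hxs.trans h.choose_spec)⟩

theorem exists_monotone_lt_of_seq {Φ : Type*} [LinearOrder Φ] (q : ℕ → Φ)
    (hq : ∀ x y, x < y → ∃ n, x < q n) : ∃ g : Φ → Φ, Monotone g ∧ ∀ x y, x < y → x < g x := by
  classical
  let g x := if h : ∃ n, x < q n then q (Nat.find h) else x
  have le_g y : y ≤ g y := by
    by_cases h : ∃ n, y < q n
    · simpa only [g, dif_pos h] using (Nat.find_spec h).le
    · simp only [g, dif_neg h, le_rfl]
  refine ⟨g, fun x y hxy => ?_, fun x y hxy => ?_⟩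
  · by_cases hx : ∃ n, x < q n
    · by_cases hy : y < q (Nat.find hx)
      · have hy' : ∃ n, y < q n := ⟨_, hy⟩
        have hfind : Nat.find hx = Nat.find hy' :=
          (Nat.find_mono fun n hn => hxy.trans_lt hn).antisymm (Nat.find_min' hy' hy)
        simp only [g, dif_pos hx, dif_pos hy', hfind, le_rfl]
      · simpa only [g, dif_pos hx] using (not_lt.1 hy).trans (le_g y)
    · simpa only [g, dif_neg hx] using hxy.trans (le_g y)
  · obtain ⟨n, hn⟩ := hq x y hxy
    have hx : ∃ n, x < q n := ⟨n, hn⟩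
    simpa only [g, dif_pos hx] using Nat.find_spec hx

/-- Exponents `θ φ` of the logarithmic derivatives `d(t_φ)/t_φ = t^(θ φ)`; the second condition
says that `θ ψ - θ φ` is infinitesimal with respect to `1_φ`. -/
structure IsHardyExponents {Φ : Type*} [LinearOrder Φ] {Γ : Type*} [AddCommGroup Γ]
    [LinearOrder Γ] [IsOrderedAddMonoid Γ] (H : HahnEmbeddingData Φ Γ) (θ : Φ → Γ) : Prop where
  strictMono : StrictMono θ
  lt_orderTop_sub : ∀ ⦃φ ψ : Φ⦄, φ < ψ → (φ : WithTop Φ) < (H.e (θ ψ - θ φ)).orderTop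

namespace HahnEmbeddingData

variable {Φ : Type*} [LinearOrder Φ] {Γ : Type*} [AddCommGroup Γ] [LinearOrder Γ]
  [IsOrderedAddMonoid Γ] {k : Type*} [Field k] (H : HahnEmbeddingData Φ Γ)

theorem pos_iff_leadingCoeff_pos {γ : Γ} : 0 < γ ↔ 0 < (H.e γ).leadingCoeff := by
  rw [H.ord, lexPos_iff_leadingCoeff_pos]

def toLexHom : Γ →+o Lex (HahnSeries Φ ℝ) where
  toFun γ := toLex (H.e γ)
  map_zero' := by simp
  map_add' x y := by simp
  monotone' := by
    refine StrictMono.monotone fun x y hxy => ?_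
    rw [← sub_pos, H.pos_iff_leadingCoeff_pos, map_sub, ← ofLex_toLex (H.e y - H.e x),
      leadingCoeff_pos_iff] at hxy
    simpa using hxy

theorem toLexHom_injective : Function.Injective H.toLexHom :=
  fun _ _ h => H.inj (toLex.injective h)

theorem mk_le_mk_iff_orderTop_le {x y : Γ} :
    ArchimedeanClass.mk x ≤ ArchimedeanClass.mk y ↔ (H.e x).orderTop ≤ (H.e y).orderTop := by
  have hmono := (ArchimedeanClass.orderHom H.toLexHom).monotone.strictMono_of_injective
    (ArchimedeanClass.orderHom_injective H.toLexHom_injective)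
  rw [← hmono.le_iff_le, ArchimedeanClass.orderHom_mk, ArchimedeanClass.orderHom_mk,
    ← (archimedeanClassOrderIsoWithTop Φ ℝ).le_iff_le, archimedeanClassOrderIsoWithTop_apply,
    archimedeanClassOrderIsoWithTop_apply]
  rfl

theorem mk_eq_mk_iff_orderTop_eq {x y : Γ} :
    ArchimedeanClass.mk x = ArchimedeanClass.mk y ↔ (H.e x).orderTop = (H.e y).orderTop := by
  rw [le_antisymm_iff, le_antisymm_iff, H.mk_le_mk_iff_orderTop_le, H.mk_le_mk_iff_orderTop_le]

theorem archEquiv_iff_orderTop_eq {x y : Γ} :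
    ArchEquiv x y ↔ (H.e x).orderTop = (H.e y).orderTop := by
  rw [archEquiv_iff_mk_eq, H.mk_eq_mk_iff_orderTop_eq]

theorem orderTop_le_of_abs_le {x y : Γ} (h : |x| ≤ |y|) : (H.e y).orderTop ≤ (H.e x).orderTop :=
  H.mk_le_mk_iff_orderTop_le.1 (ArchimedeanClass.mk_le_mk_of_abs h)

theorem orderTop_le_of_nonneg_of_le {x y : Γ} (hx : 0 ≤ x) (hxy : x ≤ y) :
    (H.e y).orderTop ≤ (H.e x).orderTop :=
  H.orderTop_le_of_abs_le (by rwa [abs_of_nonneg hx, abs_of_nonneg (hx.trans hxy)])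

theorem add_pos_of_orderTop_lt {x y : Γ} (hx : 0 < x) (h : (H.e x).orderTop < (H.e y).orderTop) :
    0 < x + y := by
  have hmk : ArchimedeanClass.mk x < ArchimedeanClass.mk (-y) := by
    rw [ArchimedeanClass.mk_neg, lt_iff_not_ge, H.mk_le_mk_iff_orderTop_le]
    exact h.not_ge
  rw [← sub_neg_eq_add, sub_pos]
  exact ArchimedeanClass.lt_of_mk_lt_mk_of_nonneg hmk hx.le

theorem exists_orderTop_eq_coe {γ : Γ} (hγ : γ ≠ 0) : ∃ u : Φ, (H.e γ).orderTop = u :=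
  WithTop.ne_top_iff_exists.1 (orderTop_ne_top.2 ((map_ne_zero_iff H.e H.inj).2 hγ)) |>.imp
    fun _ => Eq.symm

theorem isHardyExponents_neg {g : Φ → Φ} (hg : Monotone g) (hlt : ∀ φ ψ, φ < ψ → φ < g φ)
    {c : Φ → ℝ} (hc : StrictAnti c) (hc0 : ∀ φ, 0 < c φ) {ζ : Φ → Γ}
    (hζ : ∀ φ, (H.e (ζ φ)).coeff (g φ) = c φ)
    (hζlow : ∀ φ ψ, ψ < g φ → (H.e (ζ φ)).coeff ψ = 0) :
    IsHardyExponents H fun φ => -ζ φ := by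
  have hlead {φ ψ} (hφψ : φ < ψ) : 0 < (H.e (ζ φ - ζ ψ)).coeff (g φ) ∧
      ∀ w, w < g φ → (H.e (ζ φ - ζ ψ)).coeff w = 0 := by
    simp only [map_sub, coeff_sub]
    refine ⟨?_, fun w hw => by rw [hζlow φ w hw, hζlow ψ w (hw.trans_le (hg hφψ.le)), sub_zero]⟩
    rcases (hg hφψ.le).eq_or_lt with heq | hgφψ
    · rw [hζ, heq, hζ, sub_pos]
      exact hc hφψ
    · rw [hζ, hζlow ψ _ hgφψ, sub_zero]
      exact hc0 φ
  refine ⟨fun φ ψ hφψ => ?_, fun φ ψ hφψ => ?_⟩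
  · rw [← sub_pos, neg_sub_neg, H.ord]
    exact ⟨g φ, hlead hφψ⟩
  · rw [neg_sub_neg]
    exact (WithTop.coe_lt_coe.2 (hlt φ ψ hφψ)).trans_le
      (le_orderTop_iff_forall.2 fun w hw => (hlead hφψ).2 w (WithTop.coe_lt_coe.1 hw))

theorem exists_isHardyExponents (hΦ : ∃ f : Φ → ℝ, StrictMono f)
    (hribs : ∀ (φ : Φ) (x : ℝ), x ≠ 0 →
      ∃ γ : Γ, (H.e γ).coeff φ = x ∧ ∀ ψ, ψ < φ → (H.e γ).coeff ψ = 0) :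
    ∃ θ, IsHardyExponents H θ := by
  obtain ⟨f, hf⟩ := hΦ
  rcases isEmpty_or_nonempty Φ with hempty | hnonempty
  · exact ⟨isEmptyElim, fun φ => isEmptyElim φ, fun φ => isEmptyElim φ⟩
  obtain ⟨q, hq⟩ := exists_seq_forall_exists_lt hf
  obtain ⟨g, hg, hlt⟩ := exists_monotone_lt_of_seq q hq
  choose ζ hζ hζlow using fun φ => hribs (g φ) (Real.exp (-f φ)) (Real.exp_pos _).ne'
  exact ⟨_, H.isHardyExponents_neg hg hlt (fun _ _ h => Real.exp_lt_exp.2 (neg_lt_neg (hf h)))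
    (fun _ => Real.exp_pos _) hζ hζlow⟩

def component (ι : ℝ →+* k) (φ : Φ) : Γ →+ k :=
  ι.toAddMonoidHom.comp ((coeff.addMonoidHom φ).comp H.e)

/-- The pairs `(γ, φ)` contributing the nonzero term `x_γ γ_φ t^(γ + θ φ)` to `d x`. -/
def pairs (x : HahnSeries Γ k) : Set (Γ × Φ) :=
  {p | x.coeff p.1 ≠ 0 ∧ (H.e p.1).coeff p.2 ≠ 0}

end HahnEmbeddingData

namespace IsHardyExponents

variable {Φ : Type*} [LinearOrder Φ] {Γ : Type*} [AddCommGroup Γ] [LinearOrder Γ]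
  [IsOrderedAddMonoid Γ] {k : Type*} [Field k] {H : HahnEmbeddingData Φ Γ} {θ : Φ → Γ}
  (hθ : IsHardyExponents H θ) (ι : ℝ →+* k)

theorem coeff_eulerDeriv_mul_single (x : HahnSeries Γ k) (φ : Φ) (δ : Γ) :
    (eulerDeriv (H.component ι φ) x * single (θ φ) 1).coeff δ =
      x.coeff (δ - θ φ) * ι ((H.e (δ - θ φ)).coeff φ) := by
  rw [← sub_add_cancel δ (θ φ), coeff_mul_single_add, add_sub_cancel_right, mul_one]
  rfl

theorem mem_pairs_fiber_of_coeff_ne_zero {x : HahnSeries Γ k} {φ : Φ} {δ : Γ}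
    (h : (eulerDeriv (H.component ι φ) x * single (θ φ) 1).coeff δ ≠ 0) :
    (δ - θ φ, φ) ∈ {p ∈ H.pairs x | p.1 + θ p.2 = δ} := by
  rw [coeff_eulerDeriv_mul_single] at h
  exact ⟨⟨left_ne_zero_of_mul h, fun h0 => right_ne_zero_of_mul h (by rw [h0, map_zero])⟩,
    sub_add_cancel δ (θ φ)⟩

include hθ

theorem coeff_eq_of_add_le {φ ψ : Φ} {γ γ' : Γ} (hφψ : φ < ψ) (hγ : γ ≤ γ')
    (h : γ' + θ φ ≤ γ + θ ψ) : (H.e γ').coeff φ = (H.e γ).coeff φ := by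
  have hle : γ' - γ ≤ θ ψ - θ φ := by rwa [sub_le_sub_iff, add_comm (θ ψ)]
  have h0 := coeff_eq_zero_of_lt_orderTop
    ((hθ.lt_orderTop_sub hφψ).trans_le (H.orderTop_le_of_nonneg_of_le (sub_nonneg.2 hγ) hle))
  rwa [map_sub, coeff_sub, sub_eq_zero] at h0

theorem add_lt_add_of_lt {α β : Γ} {u w : Φ} (hu : (H.e α).orderTop = u)
    (hw : (H.e β).orderTop = w) (h : α < β) : α + θ u < β + θ w := by
  rcases eq_or_ne u w with rfl | huw
  · exact add_lt_add_left h _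
  have hβα : (H.e (β - α)).orderTop = ↑(min u w) := by
    rw [map_sub]
    rcases huw.lt_or_gt with huw | hwu
    · rw [← neg_sub, orderTop_neg, orderTop_sub (by rwa [hu, hw, WithTop.coe_lt_coe]), hu,
        min_eq_left huw.le]
    · rw [orderTop_sub (by rwa [hu, hw, WithTop.coe_lt_coe]), hw, min_eq_right hwu.le]
  have hθwu : (↑(min u w) : WithTop Φ) < (H.e (θ w - θ u)).orderTop := by
    rcases huw.lt_or_gt with huw | hwu
    · rw [min_eq_left huw.le]
      exact hθ.lt_orderTop_sub huw
    · rw [min_eq_right hwu.le, ← neg_sub, map_neg, orderTop_neg]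
      exact hθ.lt_orderTop_sub hwu
  rw [← sub_pos, show β + θ w - (α + θ u) = (β - α) + (θ w - θ u) by abel]
  exact H.add_pos_of_orderTop_lt (sub_pos.2 h) (hβα ▸ hθwu)

theorem not_forall_add_le (γ : ℕ → Γ) (φ : ℕ → Φ) (hγ : Monotone γ) (hφ : StrictAnti φ)
    (hcoeff : ∀ n, (H.e (γ n)).coeff (φ n) ≠ 0) : ¬ ∀ n, γ n + θ (φ n) ≤ γ 0 + θ (φ 0) := by
  intro hle
  have hsupp (n : ℕ) : (H.e (γ 0)).coeff (φ (n + 1)) ≠ 0 :=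
    hθ.coeff_eq_of_add_le (hφ n.succ_pos) (hγ n.succ.zero_le) (hle _) ▸ hcoeff _
  exact Set.isWF_iff_no_descending_seq.1 (H.e (γ 0)).isWF_support _
    (hφ.comp_strictMono fun _ _ => Nat.succ_lt_succ) hsupp

theorem exists_lt_of_injective {x : HahnSeries Γ k} (p : ℕ → Γ × Φ)
    (hp : Function.Injective p) (hmem : ∀ n, p n ∈ H.pairs x) :
    ∃ m n, m < n ∧ (p m).1 + θ (p m).2 < (p n).1 + θ (p n).2 := by
  obtain ⟨g, hg⟩ := x.isPWO_support.exists_monotone_subseq (fun n => (hmem n).1)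
  by_contra! hle
  have hanti : StrictAnti fun n => (p (g n)).2 := by
    intro m n hmn
    by_contra! hφ
    have hγ : (p (g m)).1 ≤ (p (g n)).1 := hg hmn.le
    have heq := (add_eq_add_iff_eq_and_eq hγ (hθ.strictMono.monotone hφ)).1
      ((add_le_add hγ (hθ.strictMono.monotone hφ)).antisymm (hle _ _ (g.strictMono hmn)))
    exact hmn.ne (g.injective (hp (Prod.ext heq.1 (hθ.strictMono.injective heq.2))))
  refine hθ.not_forall_add_le _ _ hg hanti (fun n => (hmem _).2) fun n => ?_
  rcases n.eq_zero_or_pos with rfl | hn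
  · exact le_rfl
  · exact hle _ _ (g.strictMono hn)

theorem isPWO_image_pairs (x : HahnSeries Γ k) :
    ((fun p : Γ × Φ => p.1 + θ p.2) '' H.pairs x).IsPWO := by
  rw [Set.isPWO_iff_isWF, Set.isWF_iff_no_descending_seq]
  intro f hf hmem
  choose p hp hpf using hmem
  have hinj : Function.Injective p := fun m n h => hf.injective (by rw [← hpf, h, hpf])
  obtain ⟨m, n, hmn, hlt⟩ := hθ.exists_lt_of_injective p hinj hp
  exact (hf hmn).not_gt (by simpa only [hpf] using hlt)

theorem finite_pairs_fiber (x : HahnSeries Γ k) (δ : Γ) :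
    {p ∈ H.pairs x | p.1 + θ p.2 = δ}.Finite := by
  by_contra hinf
  let p := (Set.Infinite.natEmbedding _ hinf)
  obtain ⟨m, n, -, hlt⟩ := hθ.exists_lt_of_injective (fun n => (p n : Γ × Φ))
    (Subtype.val_injective.comp p.injective) fun n => (p n).2.1
  exact hlt.ne ((p m).2.2.trans (p n).2.2.symm)

noncomputable def derivFamily (x : HahnSeries Γ k) : SummableFamily Γ k Φ where
  toFun φ := eulerDeriv (H.component ι φ) x * single (θ φ) 1
  isPWO_iUnion_support' := (hθ.isPWO_image_pairs x).mono fun δ hδ => by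
    obtain ⟨φ, hφ⟩ := Set.mem_iUnion.1 hδ
    exact ⟨_, (mem_pairs_fiber_of_coeff_ne_zero ι hφ).1, (mem_pairs_fiber_of_coeff_ne_zero ι hφ).2⟩
  finite_co_support' δ := ((hθ.finite_pairs_fiber x δ).image Prod.snd).subset
    fun φ hφ => ⟨_, mem_pairs_fiber_of_coeff_ne_zero ι hφ, rfl⟩

noncomputable def deriv (x : HahnSeries Γ k) : HahnSeries Γ k :=
  (hθ.derivFamily ι x).hsum

theorem exists_mem_pairs_of_coeff_deriv_ne_zero {x : HahnSeries Γ k} {δ : Γ}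
    (h : (hθ.deriv ι x).coeff δ ≠ 0) : ∃ p ∈ H.pairs x, p.1 + θ p.2 = δ := by
  rw [deriv, SummableFamily.coeff_hsum] at h
  obtain ⟨φ, hφ⟩ := not_forall.1 fun hzero => h (finsum_eq_zero_of_forall_eq_zero hzero)
  exact ⟨_, mem_pairs_fiber_of_coeff_ne_zero ι hφ⟩

theorem deriv_add (x y : HahnSeries Γ k) :
    hθ.deriv ι (x + y) = hθ.deriv ι x + hθ.deriv ι y := by
  have : hθ.derivFamily ι (x + y) = hθ.derivFamily ι x + hθ.derivFamily ι y :=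
    SummableFamily.ext fun φ => by
      simp only [SummableFamily.add_apply, derivFamily, SummableFamily.coe_mk, eulerDeriv_add,
        add_mul]
  rw [deriv, this, SummableFamily.hsum_add]
  rfl

theorem deriv_mul (x y : HahnSeries Γ k) :
    hθ.deriv ι (x * y) = hθ.deriv ι x * y + x * hθ.deriv ι y := by
  have : hθ.derivFamily ι (x * y) = y • hθ.derivFamily ι x + x • hθ.derivFamily ι y :=
    SummableFamily.ext fun φ => by
      simp only [SummableFamily.add_apply, SummableFamily.smul_apply, of_symm_smul_of_eq_mul,
        derivFamily, SummableFamily.coe_mk, eulerDeriv_mul]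
      ring
  rw [deriv, this, SummableFamily.hsum_add, SummableFamily.hsum_smul, SummableFamily.hsum_smul,
    mul_comm y]
  rfl

theorem derivFamily_single (γ : Γ) (r : k) (φ : Φ) :
    hθ.derivFamily ι (single γ r) φ = single (γ + θ φ) (r * ι ((H.e γ).coeff φ)) := by
  rw [derivFamily, SummableFamily.coe_mk, eulerDeriv_single, single_mul_single, mul_one]
  rfl

theorem deriv_single_zero (r : k) : hθ.deriv ι (single 0 r) = 0 := by
  ext δ
  rw [deriv, SummableFamily.coeff_hsum, coeff_zero]
  exact finsum_eq_zero_of_forall_eq_zero fun φ => by simp [derivFamily_single]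

theorem logDer_deriv (φ : Φ) : logDer H (hθ.deriv ι) φ = single (θ φ) 1 := by
  have hD : hθ.deriv ι (tmon H k φ) = single (H.b φ + θ φ) 1 := by
    ext δ
    rw [tmon, deriv, SummableFamily.coeff_hsum, finsum_eq_single _ φ fun ψ hψ => by
      rw [derivFamily_single, H.hb, coeff_single_of_ne hψ]; simp]
    rw [derivFamily_single, H.hb, coeff_single_same, map_one, one_mul]
  rw [logDer, hD, tmon, inv_single, single_mul_single, add_neg_cancel_comm, inv_one, mul_one]

theorem exists_mem_fiber_of_coeff_smul_deriv_single_ne_zero {x : HahnSeries Γ k} {γ δ : Γ}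
    (h : (x.coeff γ • hθ.deriv ι (single γ 1)).coeff δ ≠ 0) :
    ∃ φ, (γ, φ) ∈ {p ∈ H.pairs x | p.1 + θ p.2 = δ} := by
  rw [coeff_smul, smul_eq_mul] at h
  obtain ⟨⟨γ', φ⟩, ⟨hγ', hφ⟩, hδ⟩ :=
    hθ.exists_mem_pairs_of_coeff_deriv_ne_zero ι (right_ne_zero_of_mul h)
  obtain rfl : γ' = γ := by_contra fun hne => hγ' (coeff_single_of_ne hne)
  exact ⟨φ, ⟨left_ne_zero_of_mul h, hφ⟩, hδ⟩

noncomputable def linearFamily (x : HahnSeries Γ k) : SummableFamily Γ k Γ where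
  toFun γ := x.coeff γ • hθ.deriv ι (single γ 1)
  isPWO_iUnion_support' := (hθ.isPWO_image_pairs x).mono fun δ hδ => by
    obtain ⟨γ, hγ⟩ := Set.mem_iUnion.1 hδ
    obtain ⟨φ, hφ, hσ⟩ := hθ.exists_mem_fiber_of_coeff_smul_deriv_single_ne_zero ι hγ
    exact ⟨_, hφ, hσ⟩
  finite_co_support' δ := ((hθ.finite_pairs_fiber x δ).image Prod.fst).subset fun γ hγ => by
    obtain ⟨φ, hφ⟩ := hθ.exists_mem_fiber_of_coeff_smul_deriv_single_ne_zero ι hγ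
    exact ⟨_, hφ, rfl⟩

theorem deriv_eq_hsum_linearFamily (x : HahnSeries Γ k) :
    hθ.deriv ι x = (hθ.linearFamily ι x).hsum := by
  ext δ
  -- both sides sum `F` over its finite support, grouped by `φ` on the left and by `γ` on the right
  set F : Γ × Φ → k := fun p => (x.coeff p.1 • hθ.derivFamily ι (single p.1 1) p.2).coeff δ
  have hF : (Function.support F).Finite := (hθ.finite_pairs_fiber x δ).subset fun p hp => by
    simp only [F, derivFamily_single, coeff_smul, smul_eq_mul, one_mul, Function.mem_support,
      coeff_single] at hp
    split_ifs at hp with hσ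
    · exact ⟨⟨left_ne_zero_of_mul hp, fun h0 => right_ne_zero_of_mul hp (by simp [h0])⟩, hσ.symm⟩
    · simp at hp
  have hinner (φ : Φ) : ∑ᶠ γ, F (γ, φ) = (hθ.derivFamily ι x φ).coeff δ := by
    rw [finsum_eq_single _ (δ - θ φ) fun γ hγ => ?_]
    · simp [F, derivFamily, coeff_eulerDeriv_mul_single]
    · simp [F, derivFamily_single, coeff_single_of_ne (fun h => hγ (eq_sub_of_add_eq h.symm))]
  calc (hθ.deriv ι x).coeff δ = ∑ᶠ φ, ∑ᶠ γ, F (γ, φ) := by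
        simp only [hinner, deriv, SummableFamily.coeff_hsum]
    _ = ∑ᶠ p, F p := by
        rw [← finsum_comp_equiv (Equiv.prodComm Φ Γ),
          finsum_curry _ (hF.preimage (Equiv.prodComm Φ Γ).injective.injOn)]
        rfl
    _ = ∑ᶠ γ, ∑ᶠ φ, F (γ, φ) := finsum_curry F hF
    _ = (hθ.linearFamily ι x).hsum.coeff δ := by
        simp only [F, SummableFamily.coeff_hsum, linearFamily, SummableFamily.coe_mk, coeff_smul,
          smul_eq_mul, deriv, ← mul_finsum]

theorem add_le_add_iff {α β : Γ} {u w : Φ} (hu : (H.e α).orderTop = u)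
    (hw : (H.e β).orderTop = w) : α + θ u ≤ β + θ w ↔ α ≤ β := by
  refine ⟨fun h => not_lt.1 fun hlt => h.not_gt (hθ.add_lt_add_of_lt hw hu hlt), fun h => ?_⟩
  rcases h.eq_or_lt with rfl | hlt
  · obtain rfl : u = w := WithTop.coe_injective (hu.symm.trans hw)
    exact le_rfl
  · exact (hθ.add_lt_add_of_lt hu hw hlt).le

theorem lt_add_of_mem_pairs {a : HahnSeries Γ k} {u : Φ}
    (hu : (H.e a.order).orderTop = u) {p : Γ × Φ} (hp : p ∈ H.pairs a) (hne : p ≠ (a.order, u)) :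
    a.order + θ u < p.1 + θ p.2 := by
  obtain ⟨γ, φ⟩ := p
  obtain ⟨hγ, hφ⟩ := hp
  have hle : a.order ≤ γ := order_le_of_coeff_ne_zero hγ
  rcases lt_trichotomy φ u with hφu | rfl | huφ
  · refine lt_of_not_ge fun hσ => hφ ?_
    rw [hθ.coeff_eq_of_add_le hφu hle hσ]
    exact coeff_eq_zero_of_lt_orderTop (hu ▸ WithTop.coe_lt_coe.2 hφu)
  · exact add_lt_add_left (hle.lt_of_ne fun h => hne (by rw [h])) _
  · exact add_lt_add_of_le_of_lt hle (hθ.strictMono huφ)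

theorem orderTop_deriv {a : HahnSeries Γ k} (ha : a ≠ 0) {u : Φ}
    (hu : (H.e a.order).orderTop = u) : (hθ.deriv ι a).orderTop = ↑(a.order + θ u) := by
  refine orderTop_eq_of_le ?_ fun δ hδ => ?_
  · rw [mem_support, deriv, SummableFamily.coeff_hsum, finsum_eq_single _ u fun φ hφ => ?_]
    · rw [derivFamily, SummableFamily.coe_mk, coeff_eulerDeriv_mul_single, add_sub_cancel_right]
      exact mul_ne_zero (coeff_order_eq_zero.not.2 ha) ((map_ne_zero ι).2 (coeff_orderTop_ne hu))
    · by_contra h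
      obtain ⟨hp, hσ⟩ := mem_pairs_fiber_of_coeff_ne_zero ι h
      exact (hθ.lt_add_of_mem_pairs hu hp fun h => hφ (congrArg Prod.snd h)).ne' hσ
  · obtain ⟨p, hp, rfl⟩ := hθ.exists_mem_pairs_of_coeff_deriv_ne_zero ι hδ
    rcases eq_or_ne p (a.order, u) with rfl | hne
    · exact le_rfl
    · exact (hθ.lt_add_of_mem_pairs hu hp hne).le

theorem orderTop_deriv_mul_inv {a : HahnSeries Γ k} (ha : a ≠ 0) {u : Φ}
    (hu : (H.e a.order).orderTop = u) : (hθ.deriv ι a * a⁻¹).orderTop = θ u := by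
  rw [orderTop_mul, orderTop_inv, hθ.orderTop_deriv ι ha hu, ← order_eq_orderTop_of_ne_zero ha,
    ← WithTop.LinearOrderedAddCommGroup.coe_neg, ← WithTop.coe_add, add_neg_cancel_comm]

theorem hDone : HDone (hθ.deriv ι) := by
  ext x
  constructor
  · intro hx
    refine ⟨single 0 (x.coeff 0), x - single 0 (x.coeff 0), hθ.deriv_single_zero ι _, ?_, by abel⟩
    refine lt_of_not_ge fun hle => ?_
    set m := x - single 0 (x.coeff 0)
    have hm : m ≠ 0 := by rintro hm; simp [hm] at hle
    rw [← order_eq_orderTop_of_ne_zero hm, ← WithTop.coe_zero, WithTop.coe_le_coe] at hle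
    refine coeff_order_eq_zero.not.2 hm ?_
    rcases hle.lt_or_eq with hlt | heq
    · rw [coeff_sub, coeff_single_of_ne hlt.ne, sub_zero]
      exact coeff_eq_zero_of_lt_orderTop (hx.trans_lt' (WithTop.coe_lt_coe.2 hlt))
    · rw [heq, coeff_sub, coeff_single_same, sub_self]
  · rintro ⟨c, m, hc, hm, rfl⟩
    refine (le_min (le_of_not_gt fun hneg => ?_) hm.le).trans min_orderTop_le_orderTop_add
    have hc0 : c ≠ 0 := by rintro rfl; simp at hneg
    rw [← order_eq_orderTop_of_ne_zero hc0, ← WithTop.coe_zero, WithTop.coe_lt_coe] at hneg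
    obtain ⟨u, hu⟩ := H.exists_orderTop_eq_coe hneg.ne
    have hD := hθ.orderTop_deriv ι hc0 hu
    rw [hc, orderTop_zero] at hD
    exact WithTop.top_ne_coe hD

theorem hDtwo : HDtwo (hθ.deriv ι) := by
  intro a b ha hb hao hbo
  obtain ⟨u, hu⟩ := H.exists_orderTop_eq_coe hao
  obtain ⟨w, hw⟩ := H.exists_orderTop_eq_coe hbo
  rw [hθ.orderTop_deriv ι ha hu, hθ.orderTop_deriv ι hb hw, ← order_eq_orderTop_of_ne_zero ha,
    ← order_eq_orderTop_of_ne_zero hb, WithTop.coe_le_coe, WithTop.coe_le_coe,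
    hθ.add_le_add_iff hu hw]

theorem hDthree : HDthree (hθ.deriv ι) := by
  intro a b ha hb habs hbpos
  obtain ⟨u, hu⟩ := H.exists_orderTop_eq_coe (abs_pos.1 (hbpos.trans habs))
  obtain ⟨w, hw⟩ := H.exists_orderTop_eq_coe (abs_pos.1 hbpos)
  have huw : u ≤ w := WithTop.coe_le_coe.1 (hu ▸ hw ▸ H.orderTop_le_of_abs_le habs.le)
  rw [hθ.orderTop_deriv_mul_inv ι ha hu, hθ.orderTop_deriv_mul_inv ι hb hw,
    H.archEquiv_iff_orderTop_eq, hu, hw, WithTop.coe_le_coe, WithTop.coe_inj, WithTop.coe_inj,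
    hθ.strictMono.injective.eq_iff]
  exact ⟨hθ.strictMono.monotone huw, Iff.rfl⟩

theorem isSeriesDerivation : IsSeriesDerivation H ι (hθ.deriv ι) where
  map_add := hθ.deriv_add ι
  leibniz := hθ.deriv_mul ι
  strong_linear x := ⟨hθ.linearFamily ι x, fun _ => rfl, hθ.deriv_eq_hsum_linearFamily ι x⟩
  strong_leibniz γ := ⟨hθ.derivFamily ι (single γ 1), fun φ => by
    rw [logDer_deriv, derivFamily_single, single_mul_single, one_mul, ← C_mul_eq_smul, C_apply,
      single_mul_single, zero_add, mul_one, mul_one], rfl⟩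

theorem isHardySeriesDerivation : IsHardySeriesDerivation H ι (hθ.deriv ι) :=
  ⟨hθ.isSeriesDerivation ι, hθ.hDone ι, hθ.hDtwo ι, hθ.hDthree ι⟩

end IsHardyExponents

/-- if `Φ` is order isomorphic to a subset of `ℝ` and all the ribs of `Γ` are
equal to `ℝ` (every real number occurs as leading coefficient of an element of `Γ` at every
`φ ∈ Φ`), then `k((Γ))` carries a series derivation of Hardy type whose logarithmic
derivatives `d(t_φ)/t_φ` are monomials `c_φ t^{θ_φ}`. -/
theorem subset_of_reals_hardy_derivation {Φ : Type*} [LinearOrder Φ]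
    {Γ : Type*} [AddCommGroup Γ] [LinearOrder Γ] [IsOrderedAddMonoid Γ] {k : Type*} [Field k]
    (H : HahnEmbeddingData Φ Γ) (ι : ℝ →+* k)
    (hΦ : ∃ f : Φ → ℝ, StrictMono f)
    (hribs : ∀ (φ : Φ) (x : ℝ), x ≠ 0 →
      ∃ γ : Γ, (H.e γ).coeff φ = x ∧ ∀ ψ, ψ < φ → (H.e γ).coeff ψ = 0) :
    ∃ D : HahnSeries Γ k → HahnSeries Γ k,
      IsHardySeriesDerivation H ι D ∧
      ∀ φ : Φ, ∃ (c : k) (θ : Γ), c ≠ 0 ∧ logDer H D φ = HahnSeries.single θ c := by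
  obtain ⟨θ, hθ⟩ := H.exists_isHardyExponents hΦ hribs
  exact ⟨hθ.deriv ι, hθ.isHardySeriesDerivation ι,
    fun φ => ⟨1, θ φ, one_ne_zero, hθ.logDer_deriv ι φ⟩⟩
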